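/- arXiv:2108.00693 — 3 statements merged into one kernel-verified Lean document; each statement's English description precedes it below -/
import Mathlib

section
/- Let x : [t0, +∞) → ℝ be a Schwarzschild profile solution defined on all of [t0, +∞) (for any integer n ≥ 3). Then x(t) → +∞ as t → +∞. -/
/-- The coefficient function χ(x,t) = 2m(n−1)/(2(x²+t²)^n + m(x²+t²)). -/
noncomputable def schChi (n : ℕ) (m x t : ℝ) : ℝ :=
  2 * m * ((n : ℝ) - 1) / (2 * (x ^ 2 + t ^ 2) ^ n + m * (x ^ 2 + t ^ 2))

/-- A Schwarzschild profile solution on the interval [t0, t*), with t* ∈ ℝ ∪ {+∞}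
encoded as an `EReal`.  The functions `x'` and `x''` are the first and second
derivatives of the twice continuously differentiable positive function `x`,
which solves the profile ODE with the free-boundary initial conditions. -/
structure IsSchwarzschildProfile (n : ℕ) (m R0 t0 : ℝ) (tstar : EReal)
    (x x' x'' : ℝ → ℝ) : Prop where
  hasDeriv : ∀ t : ℝ, t0 ≤ t → (t : EReal) < tstar → HasDerivAt x (x' t) t
  hasDeriv2 : ∀ t : ℝ, t0 ≤ t → (t : EReal) < tstar → HasDerivAt x' (x'' t) t
  cont2 : ContinuousOn x'' {t : ℝ | t0 ≤ t ∧ (t : EReal) < tstar}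
  pos : ∀ t : ℝ, t0 ≤ t → (t : EReal) < tstar → 0 < x t
  ode : ∀ t : ℝ, t0 ≤ t → (t : EReal) < tstar →
    x'' t = ((t * x' t - x t) * schChi n m (x t) t + ((n : ℝ) - 2) / x t)
      * (1 + (x' t) ^ 2)
  init : x t0 = Real.sqrt (R0 ^ 2 - t0 ^ 2)
  initDeriv : t0 * x' t0 = x t0

/-!
Put `h(t) = t x'(t) - x(t)`, so that `h(t0) = 0` by the free-boundary condition and
`h' = t x''`. Wherever `h` vanishes the `χ`-term of the ODE drops out and
`h' = t (1 + x'²) (n - 2) / x > 0`, so `h` can never cross zero downwards: `h ≥ 0`.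
Hence `(x / t)' = h / t² ≥ 0`, and `x(t) ≥ (x(t0) / t0) t → ∞`.
-/

open Filter Set

theorem nonneg_of_hasDerivAt_pos_of_eq_zero {f f' : ℝ → ℝ} {a : ℝ}
    (hf : ∀ t, a ≤ t → HasDerivAt f (f' t) t) (ha : 0 ≤ f a)
    (hzero : ∀ t, a ≤ t → f t = 0 → 0 < f' t) {t : ℝ} (ht : a ≤ t) : 0 ≤ f t := by
  have hfence := image_le_of_deriv_right_lt_deriv_boundary (a := a) (b := t)
    (f := fun s => -f s) (f' := fun s => -f' s) (B := fun _ => 0) (B' := fun _ => 0)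
    (fun s hs => (hf s hs.1).continuousAt.neg.continuousWithinAt)
    (fun s hs => (hf s hs.1).neg.hasDerivWithinAt) (by simpa using ha)
    (fun _ => hasDerivAt_const _ _)
    (fun s hs hfs => by simpa using hzero s hs.1 (neg_eq_zero.mp hfs))
  simpa using hfence (right_mem_Icc.mpr ht)

theorem monotoneOn_div_self_of_le_mul_deriv {x x' : ℝ → ℝ} {a : ℝ} (ha : 0 < a)
    (hx : ∀ t, a ≤ t → HasDerivAt x (x' t) t) (hle : ∀ t, a ≤ t → x t ≤ t * x' t) :
    MonotoneOn (fun t => x t / t) (Ici a) := by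
  have hderiv : ∀ t, a ≤ t →
      HasDerivAt (fun s => x s / s) ((x' t * t - x t * 1) / t ^ 2) t :=
    fun t ht => (hx t ht).div (hasDerivAt_id t) (ha.trans_le ht).ne'
  refine monotoneOn_of_hasDerivWithinAt_nonneg (convex_Ici a)
    (fun t ht => (hderiv t ht).continuousAt.continuousWithinAt)
    (fun t ht => (hderiv t (interior_subset ht)).hasDerivWithinAt) ?_
  intro t ht
  rw [interior_Ici] at ht
  exact div_nonneg (by linarith [hle t ht.le]) (sq_nonneg t)

theorem tendsto_atTop_of_le_mul_deriv {x x' : ℝ → ℝ} {a : ℝ} (ha : 0 < a) (hxa : 0 < x a)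
    (hx : ∀ t, a ≤ t → HasDerivAt x (x' t) t) (hle : ∀ t, a ≤ t → x t ≤ t * x' t) :
    Tendsto x atTop atTop := by
  have hmono := monotoneOn_div_self_of_le_mul_deriv ha hx hle
  have hlinear : ∀ t, a ≤ t → x a / a * t ≤ x t := fun t ht => by
    have hquot : x a / a ≤ x t / t := hmono self_mem_Ici ht ht
    rwa [le_div_iff₀ (ha.trans_le ht)] at hquot
  exact tendsto_atTop_mono' atTop (eventually_atTop.mpr ⟨a, hlinear⟩)
    (tendsto_id.const_mul_atTop (div_pos hxa ha))

namespace IsSchwarzschildProfile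

variable {n : ℕ} {m R0 t0 : ℝ} {x x' x'' : ℝ → ℝ}

theorem hasDerivAt_mul_deriv_sub (hx : IsSchwarzschildProfile n m R0 t0 ⊤ x x' x'')
    {t : ℝ} (ht : t0 ≤ t) :
    HasDerivAt (fun s => s * x' s - x s) (t * x'' t) t := by
  have hd : HasDerivAt (fun s => s * x' s - x s) (1 * x' t + t * x'' t - x' t) t :=
    ((hasDerivAt_id' t).mul (hx.hasDeriv2 t ht (EReal.coe_lt_top t))).sub
      (hx.hasDeriv t ht (EReal.coe_lt_top t))
  convert hd using 1
  ring

theorem mul_deriv2_pos_of_mul_deriv_eq (hx : IsSchwarzschildProfile n m R0 t0 ⊤ x x' x'')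
    (hn : 2 < n) (ht0 : 0 < t0) {t : ℝ} (ht : t0 ≤ t) (hzero : t * x' t - x t = 0) :
    0 < t * x'' t := by
  have hn2 : (0 : ℝ) < (n : ℝ) - 2 := by
    have : (2 : ℝ) < n := by exact_mod_cast hn
    linarith
  have hxt := hx.pos t ht (EReal.coe_lt_top t)
  rw [hx.ode t ht (EReal.coe_lt_top t), hzero, zero_mul, zero_add]
  have htpos := ht0.trans_le ht
  positivity

theorem le_mul_deriv (hx : IsSchwarzschildProfile n m R0 t0 ⊤ x x' x'')
    (hn : 2 < n) (ht0 : 0 < t0) {t : ℝ} (ht : t0 ≤ t) : x t ≤ t * x' t := by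
  have hnonneg := nonneg_of_hasDerivAt_pos_of_eq_zero
    (fun _ hs => hx.hasDerivAt_mul_deriv_sub hs) (by rw [hx.initDeriv, sub_self])
    (fun _ hs => hx.mul_deriv2_pos_of_mul_deriv_eq hn ht0 hs) ht
  linarith

end IsSchwarzschildProfile

theorem statement2_general (n : ℕ) (hn : 3 ≤ n) (m R0 t0 : ℝ)
    (ht0 : 0 < t0)
    (x x' x'' : ℝ → ℝ) (hx : IsSchwarzschildProfile n m R0 t0 ⊤ x x' x'') :
    Filter.Tendsto x Filter.atTop Filter.atTop :=
  tendsto_atTop_of_le_mul_deriv ht0 (hx.pos t0 le_rfl (EReal.coe_lt_top t0))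
    (fun t ht => hx.hasDeriv t ht (EReal.coe_lt_top t)) (fun _ ht => hx.le_mul_deriv hn ht0 ht)

/-- a Schwarzschild profile solution defined on all of [t0, +∞)
satisfies x(t) → +∞ as t → +∞. -/
theorem statement2 (n : ℕ) (hn : 3 ≤ n) (m R0 t0 : ℝ) (hm : 0 < m)
    (ht0 : 0 < t0) (htR : t0 < R0)
    (x x' x'' : ℝ → ℝ) (hx : IsSchwarzschildProfile n m R0 t0 ⊤ x x' x'') :
    Filter.Tendsto x Filter.atTop Filter.atTop :=
  statement2_general n hn m R0 t0 ht0 x x' x'' hx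
end

section
/- Let n ≥ 3 be an integer, let x : [t0, T) → ℝ be a Schwarzschild profile solution, and let u : [t0, T) → ℝ be a positive, twice continuously differentiable function satisfying u''(t) = (n−2)·(1 + u'(t)²)/u(t) with u(t0) = √(R0² − t0²) and t0·u'(t0) = u(t0). Then x(t) ≥ u(t) for all t ∈ [t0, T). -/
/-!
With `v = t x' - x` the Schwarzschild equation reads `x'' = (v χ + (n - 2) / x) (1 + x'²)`,
where `χ ≥ 0`. Since `v t0 = 0` and `v' = t x''` is positive wherever `v` vanishes, `v ≥ 0`,
so `x` is a supersolution of the Euclidean profile equation `y'' = c (1 + y'²) / y`,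
`c = n - 2`, which `u` solves with the same initial data. The energy `(1 + y'²) / y ^ (2c)`
is constant along solutions and nondecreasing along increasing supersolutions; with `K` the
common initial energy this gives `u' = √(K u ^ (2c) - 1)` and `x' ≥ √(K x ^ (2c) - 1)`, and
separating variables in this autonomous equation yields `u ≤ x`.
-/

open Set

theorem apply_left_le_of_hasDerivAt_nonneg {f f' : ℝ → ℝ} {a b : ℝ}
    (hf : ∀ s ∈ Icc a b, HasDerivAt f (f' s) s) (hf' : ∀ s ∈ Icc a b, 0 ≤ f' s) :
    ∀ s ∈ Icc a b, f a ≤ f s := fun _ hs =>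
  monotoneOn_of_hasDerivWithinAt_nonneg (convex_Icc a b)
    (fun t ht => (hf t ht).continuousAt.continuousWithinAt)
    (fun t ht => (hf t (interior_subset ht)).hasDerivWithinAt)
    (fun t ht => hf' t (interior_subset ht)) (left_mem_Icc.2 (hs.1.trans hs.2)) hs hs.1

/-- Separation of variables: `Φ q = ∫ dτ / φ τ` grows at least at unit rate along `f` and at
most at unit rate along `g`. -/
theorem le_of_autonomous_comparison {φ : ℝ → ℝ} {r a b : ℝ} (hφ : Continuous φ)
    (hφpos : ∀ q, r ≤ q → 0 < φ q) {f f' g g' : ℝ → ℝ}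
    (hf : ∀ s ∈ Icc a b, HasDerivAt f (f' s) s) (hg : ∀ s ∈ Icc a b, HasDerivAt g (g' s) s)
    (hfr : ∀ s ∈ Icc a b, r ≤ f s) (hgr : ∀ s ∈ Icc a b, r ≤ g s)
    (hf' : ∀ s ∈ Icc a b, φ (f s) ≤ f' s) (hg' : ∀ s ∈ Icc a b, g' s ≤ φ (g s))
    (ha : g a ≤ f a) : ∀ s ∈ Icc a b, g s ≤ f s := by
  set Φ : ℝ → ℝ := fun q => ∫ τ in r..q, (φ τ)⁻¹
  have hcont : ∀ τ, r ≤ τ → ContinuousAt (fun τ => (φ τ)⁻¹) τ := fun τ hτ =>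
    hφ.continuousAt.inv₀ (hφpos τ hτ).ne'
  have hΦ : ∀ q, r ≤ q → HasDerivAt Φ (φ q)⁻¹ q := fun q hq =>
    intervalIntegral.integral_hasDerivAt_right
      (ContinuousOn.intervalIntegrable fun τ hτ =>
        (hcont τ (by rw [uIcc_of_le hq] at hτ; exact hτ.1)).continuousWithinAt)
      hφ.measurable.inv.stronglyMeasurable.stronglyMeasurableAtFilter (hcont q hq)
  have hΦmono : StrictMonoOn Φ (Ici r) :=
    strictMonoOn_of_hasDerivWithinAt_pos (convex_Ici r)
      (fun q hq => (hΦ q hq).continuousAt.continuousWithinAt)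
      (fun q hq => (hΦ q (interior_subset hq)).hasDerivWithinAt)
      (fun q hq => inv_pos.2 (hφpos q (interior_subset hq)))
  have hgap : ∀ s ∈ Icc a b, Φ (f a) - Φ (g a) ≤ Φ (f s) - Φ (g s) := by
    refine apply_left_le_of_hasDerivAt_nonneg (fun s hs =>
      ((hΦ _ (hfr s hs)).comp s (hf s hs)).sub ((hΦ _ (hgr s hs)).comp s (hg s hs))) ?_
    intro s hs
    have hfpos := hφpos _ (hfr s hs)
    have hgpos := hφpos _ (hgr s hs)
    calc (0 : ℝ) = 1 - 1 := (sub_self 1).symm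
      _ ≤ (φ (f s))⁻¹ * f' s - (φ (g s))⁻¹ * g' s := by
        gcongr
        · rw [le_inv_mul_iff₀ hfpos, mul_one]; exact hf' s hs
        · rw [inv_mul_le_iff₀ hgpos, mul_one]; exact hg' s hs
  intro s hs
  have hleft := left_mem_Icc.2 (hs.1.trans hs.2)
  have h0 : Φ (g a) ≤ Φ (f a) := hΦmono.monotoneOn (hgr a hleft) (hfr a hleft) ha
  exact (hΦmono.le_iff_le (hgr s hs) (hfr s hs)).1 (by linarith [hgap s hs])

/-- `(1 + y'²) / y ^ (2c)` is a first integral of the profile equation `y'' = c (1 + y'²) / y`. -/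
noncomputable def profileEnergy (c : ℝ) (y y' : ℝ → ℝ) (s : ℝ) : ℝ :=
  (1 + y' s ^ 2) / y s ^ (2 * c)

theorem hasDerivAt_profileEnergy {c s : ℝ} {y y' y'' : ℝ → ℝ} (hy : HasDerivAt y (y' s) s)
    (hy' : HasDerivAt y' (y'' s) s) (hpos : 0 < y s) :
    HasDerivAt (profileEnergy c y y')
      (2 * y' s * (y'' s - c * (1 + y' s ^ 2) / y s) / y s ^ (2 * c)) s := by
  have hpow := (hy.rpow_const (p := 2 * c) (Or.inl hpos.ne'))
  refine (((hasDerivAt_const s (1 : ℝ)).add (hy'.pow 2)).div hpow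
    (Real.rpow_pos_of_pos hpos _).ne').congr_deriv ?_
  rw [Real.rpow_sub_one hpos.ne']
  have := (Real.rpow_pos_of_pos hpos (2 * c)).ne'
  simp only [Pi.add_apply, Pi.pow_apply]
  field_simp
  ring

theorem profileEnergy_eq_of_ode {c a b : ℝ} {g g' g'' : ℝ → ℝ}
    (hg : ∀ s ∈ Icc a b, HasDerivAt g (g' s) s) (hg' : ∀ s ∈ Icc a b, HasDerivAt g' (g'' s) s)
    (hpos : ∀ s ∈ Icc a b, 0 < g s) (hode : ∀ s ∈ Icc a b, g'' s = c * (1 + g' s ^ 2) / g s) :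
    ∀ s ∈ Icc a b, profileEnergy c g g' s = profileEnergy c g g' a := by
  refine constant_of_has_deriv_right_zero
    (fun s hs => (hasDerivAt_profileEnergy (hg s hs) (hg' s hs) (hpos s hs)).continuousAt
      |>.continuousWithinAt) fun s hs => ?_
  have hs' := Ico_subset_Icc_self hs
  simpa [hode s hs'] using
    (hasDerivAt_profileEnergy (c := c) (hg s hs') (hg' s hs') (hpos s hs')).hasDerivWithinAt

structure IsProfileSupersolution (c a b : ℝ) (y y' y'' : ℝ → ℝ) : Prop where
  hasDeriv : ∀ s ∈ Icc a b, HasDerivAt y (y' s) s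
  hasDeriv2 : ∀ s ∈ Icc a b, HasDerivAt y' (y'' s) s
  pos : ∀ s ∈ Icc a b, 0 < y s
  le_deriv2 : ∀ s ∈ Icc a b, c * (1 + y' s ^ 2) / y s ≤ y'' s

namespace IsProfileSupersolution

variable {c a b : ℝ} {y y' y'' : ℝ → ℝ}

theorem deriv_ge (h : IsProfileSupersolution c a b y y' y'') (hc : 0 ≤ c) :
    ∀ s ∈ Icc a b, y' a ≤ y' s :=
  apply_left_le_of_hasDerivAt_nonneg h.hasDeriv2 fun s hs =>
    (div_nonneg (mul_nonneg hc (by positivity)) (h.pos s hs).le).trans (h.le_deriv2 s hs)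

theorem apply_ge (h : IsProfileSupersolution c a b y y' y'') (hc : 0 ≤ c) (ha : 0 ≤ y' a) :
    ∀ s ∈ Icc a b, y a ≤ y s :=
  apply_left_le_of_hasDerivAt_nonneg h.hasDeriv fun s hs => ha.trans (h.deriv_ge hc s hs)

theorem profileEnergy_ge (h : IsProfileSupersolution c a b y y' y'') (hc : 0 ≤ c)
    (ha : 0 ≤ y' a) : ∀ s ∈ Icc a b, profileEnergy c y y' a ≤ profileEnergy c y y' s :=
  apply_left_le_of_hasDerivAt_nonneg
    (fun s hs => hasDerivAt_profileEnergy (h.hasDeriv s hs) (h.hasDeriv2 s hs) (h.pos s hs))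
    fun s hs => by
      have := ha.trans (h.deriv_ge hc s hs)
      have := sub_nonneg.2 (h.le_deriv2 s hs)
      have := (Real.rpow_pos_of_pos (h.pos s hs) (2 * c)).le
      positivity

end IsProfileSupersolution

theorem IsProfileSupersolution.ge_of_ode {c a b : ℝ} {y y' y'' g g' g'' : ℝ → ℝ}
    (h : IsProfileSupersolution c a b y y' y'') (hc : 0 < c)
    (hg : ∀ s ∈ Icc a b, HasDerivAt g (g' s) s) (hg' : ∀ s ∈ Icc a b, HasDerivAt g' (g'' s) s)
    (hgpos : ∀ s ∈ Icc a b, 0 < g s) (hode : ∀ s ∈ Icc a b, g'' s = c * (1 + g' s ^ 2) / g s)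
    (ha : g a = y a) (ha' : g' a = y' a) (hslope : 0 < y' a) :
    ∀ s ∈ Icc a b, g s ≤ y s := by
  intro t ht
  have hmem : a ∈ Icc a b := left_mem_Icc.2 (ht.1.trans ht.2)
  set K := profileEnergy c y y' a
  set φ : ℝ → ℝ := fun q => √(K * q ^ (2 * c) - 1)
  have hφ : Continuous φ := Real.continuous_sqrt.comp
    ((continuous_const.mul (Real.continuous_rpow_const (by positivity))).sub continuous_const)
  have hya := h.pos a hmem
  have hK : 0 < K := div_pos (by positivity) (Real.rpow_pos_of_pos hya _)
  have hKa : K * y a ^ (2 * c) = 1 + y' a ^ 2 :=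
    div_mul_cancel₀ _ (Real.rpow_pos_of_pos hya _).ne'
  have hφpos : ∀ q, y a ≤ q → 0 < φ q := fun q hq => by
    have : y a ^ (2 * c) ≤ q ^ (2 * c) := Real.rpow_le_rpow hya.le hq (by positivity)
    exact Real.sqrt_pos.2 (by nlinarith)
  have hy_ge : ∀ s ∈ Icc a b, φ (y s) ≤ y' s := fun s hs => by
    have hpow := Real.rpow_pos_of_pos (h.pos s hs) (2 * c)
    have hE : K * y s ^ (2 * c) ≤ 1 + y' s ^ 2 :=
      (le_div_iff₀ hpow).1 (h.profileEnergy_ge hc.le hslope.le s hs)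
    calc φ (y s) ≤ √(y' s ^ 2) := Real.sqrt_le_sqrt (by linarith)
      _ = y' s := Real.sqrt_sq (hslope.le.trans (h.deriv_ge hc.le s hs))
  have hg_le : ∀ s ∈ Icc a b, g' s ≤ φ (g s) := fun s hs => by
    have hE := profileEnergy_eq_of_ode hg hg' hgpos hode s hs
    rw [show profileEnergy c g g' a = K by simp only [K, profileEnergy, ha, ha'], profileEnergy,
      div_eq_iff (Real.rpow_pos_of_pos (hgpos s hs) _).ne'] at hE
    calc g' s ≤ |g' s| := le_abs_self _
      _ = √(g' s ^ 2) := (Real.sqrt_sq_eq_abs _).symm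
      _ = φ (g s) := congrArg Real.sqrt (by linarith)
  have hgsuper : IsProfileSupersolution c a b g g' g'' :=
    ⟨hg, hg', hgpos, fun s hs => (hode s hs).ge⟩
  exact le_of_autonomous_comparison hφ hφpos h.hasDeriv hg (h.apply_ge hc.le hslope.le)
    (ha ▸ hgsuper.apply_ge hc.le (ha' ▸ hslope.le)) hy_ge hg_le ha.le t ht

theorem schChi_nonneg {n : ℕ} {m : ℝ} (hn : 1 ≤ n) (hm : 0 ≤ m) (x t : ℝ) :
    0 ≤ schChi n m x t := by
  have : (1 : ℝ) ≤ n := by exact_mod_cast hn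
  unfold schChi
  positivity

theorem Nat.cast_sub_two_pos {n : ℕ} (hn : 3 ≤ n) : (0 : ℝ) < n - 2 := by
  have : (3 : ℝ) ≤ n := by exact_mod_cast hn
  linarith

theorem forall_mem_Icc_of_forall_lt {P : ℝ → Prop} {t0 t1 : ℝ} {T : EReal}
    (h : ∀ t, t0 ≤ t → (t : EReal) < T → P t) (ht1 : (t1 : EReal) < T) :
    ∀ s ∈ Icc t0 t1, P s := fun s hs =>
  h s hs.1 ((EReal.coe_le_coe_iff.2 hs.2).trans_lt ht1)

namespace IsSchwarzschildProfile

variable {n : ℕ} {m R0 t0 : ℝ} {T : EReal} {x x' x'' : ℝ → ℝ}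

theorem mul_deriv_sub_nonneg (hx : IsSchwarzschildProfile n m R0 t0 T x x' x'') (hn : 3 ≤ n)
    (ht0 : 0 < t0) {t : ℝ} (ht : t0 ≤ t) (htT : (t : EReal) < T) : 0 ≤ t * x' t - x t := by
  have hd := forall_mem_Icc_of_forall_lt hx.hasDeriv htT
  have hd2 := forall_mem_Icc_of_forall_lt hx.hasDeriv2 htT
  have hv : ∀ s ∈ Icc t0 t, HasDerivAt (fun s => x s - s * x' s) (-(s * x'' s)) s :=
    fun s hs => ((hd s hs).sub ((hasDerivAt_id s).mul (hd2 s hs))).congr_deriv (by simp)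
  have key := image_le_of_deriv_right_lt_deriv_boundary (B := fun _ => 0) (B' := fun _ => 0)
    (fun s hs => (hv s hs).continuousAt.continuousWithinAt)
    (fun s hs => (hv s (Ico_subset_Icc_self hs)).hasDerivWithinAt)
    (by simp [hx.initDeriv]) (fun _ => hasDerivAt_const _ _) ?_ ⟨ht, le_rfl⟩
  · simpa using key
  intro s hs hzero
  have hs' := Ico_subset_Icc_self hs
  have hxs := forall_mem_Icc_of_forall_lt hx.pos htT s hs'
  rw [neg_lt_zero, forall_mem_Icc_of_forall_lt hx.ode htT s hs',
    show s * x' s - x s = 0 by linarith, zero_mul, zero_add]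
  have := ht0.trans_le hs'.1
  have := Nat.cast_sub_two_pos hn
  positivity

theorem isProfileSupersolution (hx : IsSchwarzschildProfile n m R0 t0 T x x' x'')
    (hn : 3 ≤ n) (hm : 0 < m) (ht0 : 0 < t0) {t1 : ℝ} (ht1 : (t1 : EReal) < T) :
    IsProfileSupersolution ((n : ℝ) - 2) t0 t1 x x' x'' := by
  refine ⟨forall_mem_Icc_of_forall_lt hx.hasDeriv ht1,
    forall_mem_Icc_of_forall_lt hx.hasDeriv2 ht1, forall_mem_Icc_of_forall_lt hx.pos ht1,
    forall_mem_Icc_of_forall_lt (fun s hs hsT => ?_) ht1⟩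
  have := hx.mul_deriv_sub_nonneg hn ht0 hs hsT
  have := schChi_nonneg (by omega : 1 ≤ n) hm.le (x s) s
  rw [hx.ode s hs hsT, add_mul, mul_div_right_comm]
  exact le_add_of_nonneg_left (by positivity)

end IsSchwarzschildProfile

theorem statement10_general (n : ℕ) (hn : 3 ≤ n) (m R0 t0 : ℝ) (hm : 0 < m)
    (ht0 : 0 < t0) (T : EReal) (hT : (t0 : EReal) < T)
    (x x' x'' : ℝ → ℝ) (hx : IsSchwarzschildProfile n m R0 t0 T x x' x'')
    (u u' u'' : ℝ → ℝ)
    (hu1 : ∀ t : ℝ, t0 ≤ t → (t : EReal) < T → HasDerivAt u (u' t) t)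
    (hu2 : ∀ t : ℝ, t0 ≤ t → (t : EReal) < T → HasDerivAt u' (u'' t) t)
    (hupos : ∀ t : ℝ, t0 ≤ t → (t : EReal) < T → 0 < u t)
    (hode : ∀ t : ℝ, t0 ≤ t → (t : EReal) < T →
      u'' t = ((n : ℝ) - 2) * (1 + (u' t) ^ 2) / u t)
    (hinit : u t0 = Real.sqrt (R0 ^ 2 - t0 ^ 2))
    (hinit' : t0 * u' t0 = u t0) :
    ∀ t : ℝ, t0 ≤ t → (t : EReal) < T → u t ≤ x t := by
  intro t ht htT
  have ha : u t0 = x t0 := hinit.trans hx.init.symm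
  have ha' : u' t0 = x' t0 := mul_left_cancel₀ ht0.ne' (by rw [hinit', hx.initDeriv, ha])
  have hslope : 0 < x' t0 :=
    pos_of_mul_pos_right (hx.initDeriv ▸ hx.pos t0 le_rfl hT) ht0.le
  exact (hx.isProfileSupersolution hn hm ht0 htT).ge_of_ode (Nat.cast_sub_two_pos hn)
    (forall_mem_Icc_of_forall_lt hu1 htT) (forall_mem_Icc_of_forall_lt hu2 htT)
    (forall_mem_Icc_of_forall_lt hupos htT) (forall_mem_Icc_of_forall_lt hode htT)
    ha ha' hslope t ⟨ht, le_rfl⟩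

/-- a Schwarzschild profile solution x lies above the solution u
of the Euclidean comparison ODE u'' = (n−2)(1+u'²)/u with the same
free-boundary initial conditions. -/
theorem statement10 (n : ℕ) (hn : 3 ≤ n) (m R0 t0 : ℝ) (hm : 0 < m)
    (ht0 : 0 < t0) (htR : t0 < R0) (T : EReal) (hT : (t0 : EReal) < T)
    (x x' x'' : ℝ → ℝ) (hx : IsSchwarzschildProfile n m R0 t0 T x x' x'')
    (u u' u'' : ℝ → ℝ)
    (hu1 : ∀ t : ℝ, t0 ≤ t → (t : EReal) < T → HasDerivAt u (u' t) t)
    (hu2 : ∀ t : ℝ, t0 ≤ t → (t : EReal) < T → HasDerivAt u' (u'' t) t)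
    (hu2c : ContinuousOn u'' {t : ℝ | t0 ≤ t ∧ (t : EReal) < T})
    (hupos : ∀ t : ℝ, t0 ≤ t → (t : EReal) < T → 0 < u t)
    (hode : ∀ t : ℝ, t0 ≤ t → (t : EReal) < T →
      u'' t = ((n : ℝ) - 2) * (1 + (u' t) ^ 2) / u t)
    (hinit : u t0 = Real.sqrt (R0 ^ 2 - t0 ^ 2))
    (hinit' : t0 * u' t0 = u t0) :
    ∀ t : ℝ, t0 ≤ t → (t : EReal) < T → u t ≤ x t :=
  statement10_general n hn m R0 t0 hm ht0 T hT x x' x'' hx u u' u'' hu1 hu2 hupos hode hinit hinit'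
end

section
/- Let x : [t0, t*) → ℝ be a general profile solution (for any integer n ≥ 3 and any C¹ function U : (0,∞) → ℝ with U'(s) < 0 for all s > 0). Then the function Ψ(t) = t·x'(t) − x(t) satisfies Ψ(t0) = 0, Ψ'(t) > 0 on (t0, t*) and Ψ(t) ≥ 0 on [t0, t*); consequently x'(t) ≥ x(t)/t > 0 and x''(t) ≥ (n−2)·(1 + x'(t)²)/x(t) for all t ∈ [t0, t*). -/
/-!
Along a profile solution `Ψ(t) = t x'(t) - x(t)` has derivative `t x''(t)`, and the ODE reads
`x'' = [2(n-1)(-U')Ψ + (n-2)/x](1 + x'²)`. At a zero of `Ψ` this gives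
`Ψ' = t (n-2)(1 + x'²)/x > 0`, so `Ψ`, which vanishes at `t0` by the free-boundary condition,
can never cross below zero. Once `Ψ ≥ 0`, the term `2(n-1)(-U')Ψ` is nonnegative, which yields
the lower bound on `x''`, and `x' ≥ x/t` is `Ψ ≥ 0` divided by `t`.
-/

/-- A general profile solution on the interval [t0, t*) (t* ∈ ℝ ∪ {+∞} encoded
as an `EReal`) for the conformal metric e^{2U(|x|²)}⟨,⟩ on ℝⁿ minus the ball of
radius r0: a twice continuously differentiable positive function `x` (with
first and second derivatives `x'`, `x''`) solving the profile ODE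
x'' = [−2(n−1)·U'(x²+t²)·(t·x' − x) + (n−2)/x]·(1 + x'²)
with the free-boundary initial conditions. Here `U'` is the derivative of U. -/
structure IsGeneralProfile (n : ℕ) (U' : ℝ → ℝ) (r0 t0 : ℝ) (tstar : EReal)
    (x x' x'' : ℝ → ℝ) : Prop where
  hasDeriv : ∀ t : ℝ, t0 ≤ t → (t : EReal) < tstar → HasDerivAt x (x' t) t
  hasDeriv2 : ∀ t : ℝ, t0 ≤ t → (t : EReal) < tstar → HasDerivAt x' (x'' t) t
  cont2 : ContinuousOn x'' {t : ℝ | t0 ≤ t ∧ (t : EReal) < tstar}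
  pos : ∀ t : ℝ, t0 ≤ t → (t : EReal) < tstar → 0 < x t
  ode : ∀ t : ℝ, t0 ≤ t → (t : EReal) < tstar →
    x'' t = (-2 * ((n : ℝ) - 1) * U' ((x t) ^ 2 + t ^ 2) * (t * x' t - x t)
      + ((n : ℝ) - 2) / x t) * (1 + (x' t) ^ 2)
  init : x t0 = Real.sqrt (r0 ^ 2 - t0 ^ 2)
  initDeriv : t0 * x' t0 = x t0

open Set

theorem nonneg_of_hasDerivAt_of_deriv_pos_of_eq_zero {f f' : ℝ → ℝ} {a b : ℝ}
    (hf : ∀ t ∈ Icc a b, HasDerivAt f (f' t) t) (ha : 0 ≤ f a)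
    (hzero : ∀ t ∈ Ico a b, f t = 0 → 0 < f' t) : ∀ t ∈ Icc a b, 0 ≤ f t :=
  image_le_of_deriv_right_lt_deriv_boundary' continuousOn_const
    (fun _ _ => hasDerivWithinAt_const _ _ 0) ha
    (fun t ht => (hf t ht).continuousAt.continuousWithinAt)
    (fun t ht => (hf t (Ico_subset_Icc_self ht)).hasDerivWithinAt)
    (fun t ht h => hzero t ht h.symm)

namespace IsGeneralProfile

variable {n : ℕ} {U' : ℝ → ℝ} {r0 t0 : ℝ} {tstar : EReal} {x x' x'' : ℝ → ℝ}

theorem hasDerivAt_defect (hx : IsGeneralProfile n U' r0 t0 tstar x x' x'') {t : ℝ}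
    (ht : t0 ≤ t) (hts : (t : EReal) < tstar) :
    HasDerivAt (fun s => s * x' s - x s) (t * x'' t) t := by
  refine (((hasDerivAt_id' t).mul (hx.hasDeriv2 t ht hts)).sub
    (hx.hasDeriv t ht hts)).congr_deriv ?_
  ring

theorem secondDeriv_of_defect_eq_zero (hx : IsGeneralProfile n U' r0 t0 tstar x x' x'')
    {t : ℝ} (ht : t0 ≤ t) (hts : (t : EReal) < tstar) (hΨ : t * x' t - x t = 0) :
    x'' t = ((n : ℝ) - 2) * (1 + x' t ^ 2) / x t := by
  rw [hx.ode t ht hts, hΨ]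
  ring

theorem le_secondDeriv_of_defect_nonneg (hx : IsGeneralProfile n U' r0 t0 tstar x x' x'')
    (hn : 1 ≤ n) (hU' : ∀ s, 0 < s → U' s ≤ 0) {t : ℝ} (ht : t0 ≤ t)
    (hts : (t : EReal) < tstar) (hΨ : 0 ≤ t * x' t - x t) :
    ((n : ℝ) - 2) * (1 + x' t ^ 2) / x t ≤ x'' t := by
  have hxt := hx.pos t ht hts
  have hn1 : (1 : ℝ) ≤ n := by exact_mod_cast hn
  have hdrift : 0 ≤ -2 * ((n : ℝ) - 1) * U' (x t ^ 2 + t ^ 2) * (t * x' t - x t) :=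
    mul_nonneg (mul_nonneg_of_nonpos_of_nonpos (by nlinarith) (hU' _ (by positivity))) hΨ
  rw [hx.ode t ht hts, mul_div_right_comm]
  gcongr
  linarith

theorem secondDeriv_pos_of_defect_nonneg (hx : IsGeneralProfile n U' r0 t0 tstar x x' x'')
    (hn : 3 ≤ n) (hU' : ∀ s, 0 < s → U' s ≤ 0) {t : ℝ} (ht : t0 ≤ t)
    (hts : (t : EReal) < tstar) (hΨ : 0 ≤ t * x' t - x t) : 0 < x'' t := by
  have hn3 : (3 : ℝ) ≤ n := by exact_mod_cast hn
  have hxt := hx.pos t ht hts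
  refine lt_of_lt_of_le ?_ (hx.le_secondDeriv_of_defect_nonneg (by omega) hU' ht hts hΨ)
  exact div_pos (mul_pos (by linarith) (by positivity)) hxt

theorem defect_nonneg (hx : IsGeneralProfile n U' r0 t0 tstar x x' x'') (hn : 3 ≤ n)
    (ht0 : 0 < t0) {t : ℝ} (ht : t0 ≤ t) (hts : (t : EReal) < tstar) :
    0 ≤ t * x' t - x t := by
  have hn3 : (3 : ℝ) ≤ n := by exact_mod_cast hn
  have hdom : ∀ s ∈ Icc t0 t, (s : EReal) < tstar := fun s hs =>
    lt_of_le_of_lt (EReal.coe_le_coe_iff.2 hs.2) hts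
  refine nonneg_of_hasDerivAt_of_deriv_pos_of_eq_zero
    (fun s hs => hx.hasDerivAt_defect hs.1 (hdom s hs)) (by rw [hx.initDeriv, sub_self])
    (fun s hs hzero => ?_) t ⟨ht, le_rfl⟩
  have hs := Ico_subset_Icc_self hs
  rw [hx.secondDeriv_of_defect_eq_zero hs.1 (hdom s hs) hzero]
  have hxs := hx.pos s hs.1 (hdom s hs)
  exact mul_pos (ht0.trans_le hs.1) (div_pos (mul_pos (by linarith) (by positivity)) hxs)

end IsGeneralProfile

theorem statement12_general (n : ℕ) (hn : 3 ≤ n) (r0 t0 : ℝ)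
    (ht0 : 0 < t0)
    (U' : ℝ → ℝ)
    (hUneg : ∀ s : ℝ, 0 < s → U' s < 0)
    (tstar : EReal)
    (x x' x'' : ℝ → ℝ) (hx : IsGeneralProfile n U' r0 t0 tstar x x' x'') :
    (t0 * x' t0 - x t0 = 0) ∧
    (∀ t : ℝ, t0 < t → (t : EReal) < tstar →
      HasDerivAt (fun s => s * x' s - x s) (t * x'' t) t ∧ 0 < t * x'' t) ∧
    (∀ t : ℝ, t0 ≤ t → (t : EReal) < tstar → 0 ≤ t * x' t - x t) ∧
    (∀ t : ℝ, t0 ≤ t → (t : EReal) < tstar → x t / t ≤ x' t ∧ 0 < x t / t) ∧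
    (∀ t : ℝ, t0 ≤ t → (t : EReal) < tstar →
      ((n : ℝ) - 2) * (1 + (x' t) ^ 2) / x t ≤ x'' t) := by
  have hU' : ∀ s, 0 < s → U' s ≤ 0 := fun s hs => (hUneg s hs).le
  have hΨ := fun t (ht : t0 ≤ t) hts => hx.defect_nonneg hn ht0 ht hts
  refine ⟨by rw [hx.initDeriv, sub_self], fun t ht hts => ⟨hx.hasDerivAt_defect ht.le hts, ?_⟩,
    hΨ, fun t ht hts => ⟨?_, ?_⟩,
    fun t ht hts => hx.le_secondDeriv_of_defect_nonneg (by omega) hU' ht hts (hΨ t ht hts)⟩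
  · exact mul_pos (ht0.trans ht)
      (hx.secondDeriv_pos_of_defect_nonneg hn hU' ht.le hts (hΨ t ht.le hts))
  · rw [div_le_iff₀ (ht0.trans_le ht)]
    linarith [hΨ t ht hts]
  · exact div_pos (hx.pos t ht hts) (ht0.trans_le ht)

/-- for a general profile solution (U C¹ with U' < 0 on (0,∞)),
Ψ(t) = t·x'(t) − x(t) satisfies Ψ(t0) = 0, Ψ'(t) = t·x''(t) > 0 on (t0,t*),
Ψ ≥ 0 on [t0,t*); consequently x'(t) ≥ x(t)/t > 0 and
x''(t) ≥ (n−2)(1 + x'(t)²)/x(t) on [t0,t*). -/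
theorem statement12 (n : ℕ) (hn : 3 ≤ n) (r0 t0 : ℝ) (hr0 : 0 < r0)
    (ht0 : 0 < t0) (htr : t0 < r0)
    (U U' : ℝ → ℝ)
    (hU : ∀ s : ℝ, 0 < s → HasDerivAt U (U' s) s)
    (hUc : ContinuousOn U' (Set.Ioi (0 : ℝ)))
    (hUneg : ∀ s : ℝ, 0 < s → U' s < 0)
    (tstar : EReal) (hts : (t0 : EReal) < tstar)
    (x x' x'' : ℝ → ℝ) (hx : IsGeneralProfile n U' r0 t0 tstar x x' x'') :
    (t0 * x' t0 - x t0 = 0) ∧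
    (∀ t : ℝ, t0 < t → (t : EReal) < tstar →
      HasDerivAt (fun s => s * x' s - x s) (t * x'' t) t ∧ 0 < t * x'' t) ∧
    (∀ t : ℝ, t0 ≤ t → (t : EReal) < tstar → 0 ≤ t * x' t - x t) ∧
    (∀ t : ℝ, t0 ≤ t → (t : EReal) < tstar → x t / t ≤ x' t ∧ 0 < x t / t) ∧
    (∀ t : ℝ, t0 ≤ t → (t : EReal) < tstar →
      ((n : ℝ) - 2) * (1 + (x' t) ^ 2) / x t ≤ x'' t) :=
  statement12_general n hn r0 t0 ht0 U' hUneg tstar x x' x'' hx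
end
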